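/- arXiv:2005.10491 — 2 statements merged into one kernel-verified Lean document; each statement's English description precedes it below -/
import Mathlib

section
/- The graph G(ℤ,{2,3}) admits no (1,2,2,2,2)-packing coloring: there is no f:ℤ→{1,…,5} with f⁻¹(1) independent and f⁻¹(i) a 2-packing for i∈{2,3,4,5}. -/
/-!
Count the colour classes inside the 35 consecutive integers `0, …, 34`. Two integers at most
`6` apart are at distance at most `2`, so a 2-packing meets each of the five blocks of `7`
consecutive integers at most once: at most `5` points. Among any `5` consecutive integers
three pairwise non-adjacent ones do not exist, so the independent class meets each of the
seven blocks of `5` at most twice: at most `14` points. Five classes then cover at most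
`14 + 4 * 5 = 34 < 35` integers.
-/

def distG (t : ℤ) : SimpleGraph ℤ :=
  SimpleGraph.fromRel (fun i j => |i - j| = 2 ∨ |i - j| = t)

open Finset

lemma distG_adj_iff {t u v : ℤ} :
    (distG t).Adj u v ↔ u ≠ v ∧ (|u - v| = 2 ∨ |u - v| = t) := by
  simp only [distG, SimpleGraph.fromRel_adj, abs_sub_comm v u, or_self]

lemma distG_three_adj_iff {u v : ℤ} : (distG 3).Adj u v ↔ |u - v| = 2 ∨ |u - v| = 3 := by
  rw [distG_adj_iff]
  exact ⟨And.right, fun h => ⟨fun huv => by subst huv; simp at h, h⟩⟩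

lemma distG_three_dist_le_two {u v : ℤ} (hne : u ≠ v) (hle : |u - v| ≤ 6) :
    (distG 3).dist u v ≤ 2 := by
  wlog hlt : v < u generalizing u v
  · rw [SimpleGraph.dist_comm]
    exact this hne.symm (by rwa [abs_sub_comm]) (by omega)
  rw [abs_of_pos (sub_pos.mpr hlt)] at hle
  by_cases hadj : (distG 3).Adj u v
  · exact (SimpleGraph.dist_le (.cons hadj .nil)).trans (by simp)
  rw [distG_three_adj_iff, abs_of_pos (sub_pos.mpr hlt)] at hadj
  -- `1 = 3 - 2`, `4 = 2 + 2`, `5 = 3 + 2`, `6 = 3 + 3`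
  obtain ⟨w, huw, hwv⟩ : ∃ w, (distG 3).Adj u w ∧ (distG 3).Adj w v := by
    simp only [distG_three_adj_iff, abs_eq (by norm_num : (0 : ℤ) ≤ 2),
      abs_eq (by norm_num : (0 : ℤ) ≤ 3)]
    by_cases h45 : u - v = 4 ∨ u - v = 5
    · exact ⟨v + 2, by omega, by omega⟩
    · exact ⟨v + 3, by omega, by omega⟩
  exact (SimpleGraph.dist_le (.cons huw (.cons hwv .nil))).trans (by simp)

lemma card_filter_Ico_le_mul {P : ℤ → Prop} [DecidablePred P] {m c : ℕ}
    (hP : ∀ b, #{x ∈ Ico b (b + m) | P x} ≤ c) (a : ℤ) (k : ℕ) :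
    #{x ∈ Ico a (a + k * m) | P x} ≤ k * c := by
  induction k with
  | zero => simp
  | succ k ih =>
    have hsplit :
        Ico a (a + k * m) ∪ Ico (a + k * m) (a + k * m + m) = Ico a (a + ↑(k + 1) * m) := by
      rw [Ico_union_Ico_eq_Ico (le_add_of_nonneg_right (by positivity))
        (le_add_of_nonneg_right (by positivity))]
      push_cast
      ring_nf
    calc #{x ∈ Ico a (a + ↑(k + 1) * m) | P x}
        ≤ #{x ∈ Ico a (a + k * m) | P x} + #{x ∈ Ico (a + k * m) (a + k * m + m) | P x} := by
          rw [← hsplit, filter_union]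
          exact card_union_le _ _
      _ ≤ k * c + c := add_le_add ih (hP _)
      _ = (k + 1) * c := by ring

lemma card_filter_Ico_seven_le_one_of_packing {P : ℤ → Prop} [DecidablePred P]
    (hP : ∀ u v, P u → P v → u ≠ v → 2 < (distG 3).dist u v) (b : ℤ) :
    #{x ∈ Ico b (b + 7) | P x} ≤ 1 := by
  refine card_le_one.mpr fun u hu v hv => by_contra fun hne => ?_
  simp only [mem_filter, mem_Ico] at hu hv
  exact (distG_three_dist_le_two hne (abs_le.mpr ⟨by omega, by omega⟩)).not_gt
    (hP u v hu.2 hv.2 hne)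

lemma card_filter_Ico_five_le_two_of_independent {P : ℤ → Prop} [DecidablePred P]
    (hP : ∀ u v, P u → P v → ¬ (distG 3).Adj u v) (b : ℤ) :
    #{x ∈ Ico b (b + 5) | P x} ≤ 2 := by
  by_contra! h
  obtain ⟨u, hu, v, hv, w, hw, huv, huw, hvw⟩ := two_lt_card.mp h
  simp only [mem_filter, mem_Ico] at hu hv hw
  have := hP u v hu.2 hv.2
  have := hP u w hu.2 hw.2
  have := hP v w hv.2 hw.2
  simp only [distG_three_adj_iff, abs_eq (by norm_num : (0 : ℤ) ≤ 2),
    abs_eq (by norm_num : (0 : ℤ) ≤ 3)] at *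
  omega

theorem stmt7 :
    ¬ ∃ f : ℤ → Fin 5, ∀ u v : ℤ, u ≠ v → f u = f v →
      ((f u : ℕ) = 0 → ¬ (distG 3).Adj u v) ∧ (1 ≤ (f u : ℕ) → 2 < (distG 3).dist u v) := by
  rintro ⟨f, hf⟩
  have hpacking (c : Fin 5) (hc : c ≠ 0) : #{x ∈ Ico 0 35 | f x = c} ≤ 5 :=
    card_filter_Ico_le_mul (card_filter_Ico_seven_le_one_of_packing fun u v (hu : f u = c) hv hne =>
      (hf u v hne (hu.trans hv.symm)).2 (hu ▸ Fin.pos_iff_ne_zero.mpr hc)) 0 5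
  have hindependent : #{x ∈ Ico 0 35 | f x = 0} ≤ 14 := by
    refine card_filter_Ico_le_mul
      (card_filter_Ico_five_le_two_of_independent fun u v hu hv => ?_) 0 7
    rcases eq_or_ne u v with rfl | hne
    · exact SimpleGraph.irrefl _
    · exact (hf u v hne (hu.trans hv.symm)).1 (by rw [hu]; rfl)
  have hcover := card_eq_sum_card_fiberwise (f := f) (t := univ) (s := Ico (0 : ℤ) 35)
    fun _ _ => mem_univ _
  rw [Int.card_Ico, Fin.sum_univ_five] at hcover
  have := hpacking 1 (by decide)
  have := hpacking 2 (by decide)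
  have := hpacking 3 (by decide)
  have := hpacking 4 (by decide)
  omega
end

section
/- If t ≥ 3 is odd and d ≤ (t+1)/2, then the d-distance chromatic number of G(ℤ,{2,t}) is at most 1 + d(d+1). -/
/-!
Join two vertices of `distG t` whenever their distance is at most `d`; the colouring sought is a
proper colouring of this power graph. A walk of length at most `d` from `u` to `v` gives
`v - u = 2α + tβ` with `|α| + |β| ≤ d`, so every edge of the power graph has length `|2α + tβ|`
for one of the `d(d + 1)` nonzero points `(α, β)` of that diamond taken up to sign (the graph is
connected because `t` is odd). A graph on `ℤ` whose edge lengths lie in a finite set `P` is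
greedily `(#P + 1)`-colourable.
-/

open Finset SimpleGraph

theorem SimpleGraph.Colorable.of_wellFounded {V : Type*} (G : SimpleGraph V)
    {r : V → V → Prop} (hr : WellFounded r) (hcomp : ∀ ⦃v w⦄, G.Adj v w → r v w ∨ r w v)
    {k : ℕ} (hdeg : ∀ v, ∃ s : Finset V, (∀ w, G.Adj v w → r w v → w ∈ s) ∧ #s ≤ k) :
    G.Colorable (k + 1) := by
  classical
  choose s hs hcard using hdeg
  have hfree : ∀ v (c : ∀ w, r w v → Fin (k + 1)), ∃ i, ∀ w (hw : r w v), w ∈ s v → c w hw ≠ i := by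
    intro v c
    let used : Finset (Fin (k + 1)) := (s v).image fun w => if hw : r w v then c w hw else 0
    have hused : #used < #(univ : Finset (Fin (k + 1))) := by
      simpa using card_image_le.trans_lt (Nat.lt_succ_of_le (hcard v))
    obtain ⟨i, -, hi⟩ := exists_mem_notMem_of_card_lt_card hused
    exact ⟨i, fun w hw hws hwi => hi (mem_image.2 ⟨w, hws, by rw [dif_pos hw, hwi]⟩)⟩
  choose pick hpick using hfree
  let color : V → Fin (k + 1) := hr.fix pick
  refine ⟨Coloring.mk color fun {v w} hvw hc => ?_⟩
  wlog hwv : r w v generalizing v w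
  · exact this hvw.symm hc.symm ((hcomp hvw).resolve_right hwv)
  refine hpick v (fun w _ => color w) w hwv (hs v w hvw hwv) ?_
  rw [← hc]
  exact hr.fix_eq pick v

lemma Equiv.intEquivNat_ofNat (n : ℕ) : intEquivNat (Int.ofNat n) = 2 * n := rfl

lemma Equiv.intEquivNat_negSucc (n : ℕ) : intEquivNat (Int.negSucc n) = 2 * n + 1 := rfl

lemma Equiv.lt_of_intEquivNat_lt_of_nonneg {v w : ℤ} (h : intEquivNat w < intEquivNat v)
    (hv : 0 ≤ v) : w < v := by
  cases v <;> cases w <;> simp only [intEquivNat_ofNat, intEquivNat_negSucc] at h <;>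
    simp only [Int.ofNat_eq_natCast, Int.negSucc_eq] at * <;> omega

lemma Equiv.lt_of_intEquivNat_lt_of_neg {v w : ℤ} (h : intEquivNat w < intEquivNat v)
    (hv : v < 0) : v < w := by
  cases v <;> cases w <;> simp only [intEquivNat_ofNat, intEquivNat_negSucc] at h <;>
    simp only [Int.ofNat_eq_natCast, Int.negSucc_eq] at * <;> omega

/-- Colour in the order `0, -1, 1, -2, 2, …` of `Equiv.intEquivNat`: the earlier vertices are
all below a nonnegative `v` and all above a negative `v`. -/
theorem SimpleGraph.colorable_of_adj_abs_sub_mem {G : SimpleGraph ℤ} (P : Finset ℤ)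
    (hP : ∀ ⦃u v⦄, G.Adj u v → |u - v| ∈ P) : G.Colorable (#P + 1) := by
  refine Colorable.of_wellFounded G (InvImage.wf Equiv.intEquivNat wellFounded_lt)
    (fun v w hvw => lt_or_gt_of_ne (Equiv.intEquivNat.injective.ne (G.ne_of_adj hvw)))
    fun v => ⟨if 0 ≤ v then P.image (v - ·) else P.image (v + ·), fun w hvw hwv => ?_, ?_⟩
  · have hvw := hP hvw
    split_ifs with hv
    · have := Equiv.lt_of_intEquivNat_lt_of_nonneg hwv hv
      exact mem_image.2 ⟨_, hvw, by rw [abs_of_pos (by omega)]; ring⟩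
    · have := Equiv.lt_of_intEquivNat_lt_of_neg hwv (by omega)
      exact mem_image.2 ⟨_, hvw, by rw [abs_of_neg (by omega)]; ring⟩
  · split_ifs <;> exact card_image_le

theorem SimpleGraph.preconnected_of_reachable_add_one {G : SimpleGraph ℤ}
    (h : ∀ x, G.Reachable x (x + 1)) : G.Preconnected := by
  intro u v
  wlog huv : u ≤ v generalizing u v
  · exact (this v u (by omega)).symm
  induction v, huv using Int.leInduction with
  | base => rfl
  | succ n _ ih => exact ih.trans (h n)

lemma distG_adj_add_two (t x : ℤ) : (distG t).Adj x (x + 2) := by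
  simp [distG]

lemma distG_adj_add {t : ℤ} (ht : 0 < t) (x : ℤ) : (distG t).Adj x (x + t) := by
  simp [distG, ht.ne', abs_of_pos ht]

lemma exists_sub_eq_of_distG_adj {t a b : ℤ} (h : (distG t).Adj a b) :
    ∃ e f : ℤ, b - a = 2 * e + t * f ∧ |e| + |f| ≤ 1 := by
  simp only [distG, fromRel_adj, abs_sub_comm a b, or_self] at h
  obtain ⟨-, h | h⟩ := h <;> rcases abs_choice (b - a) with hs | hs <;> rw [hs] at h
  · exact ⟨1, 0, by linarith, by simp⟩
  · exact ⟨-1, 0, by linarith, by simp⟩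
  · exact ⟨0, 1, by linarith, by simp⟩
  · exact ⟨0, -1, by linarith, by simp⟩

lemma exists_sub_eq_of_distG_walk {t : ℤ} {u v : ℤ} (p : (distG t).Walk u v) :
    ∃ α β : ℤ, v - u = 2 * α + t * β ∧ |α| + |β| ≤ p.length := by
  induction p with
  | nil => exact ⟨0, 0, by simp⟩
  | @cons a b c hab p ih =>
    obtain ⟨α, β, hp, hlen⟩ := ih
    obtain ⟨e, f, hab, hef⟩ := exists_sub_eq_of_distG_adj hab
    refine ⟨α + e, β + f, by linear_combination hp + hab, ?_⟩
    calc |α + e| + |β + f| ≤ (|α| + |β|) + (|e| + |f|) := by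
          linarith [abs_add_le α e, abs_add_le β f]
      _ ≤ _ := by push_cast [Walk.length_cons]; omega

lemma distG_reachable_add_two_mul (t x : ℤ) (k : ℕ) : (distG t).Reachable x (x + 2 * k) := by
  induction k with
  | zero => simp
  | succ k ih =>
    convert ih.trans (distG_adj_add_two t _).reachable using 1
    push_cast; ring

lemma distG_preconnected {t : ℤ} (ht : Odd t) (h0 : 0 < t) : (distG t).Preconnected := by
  refine preconnected_of_reachable_add_one fun x => ?_
  obtain ⟨k, rfl⟩ := ht
  lift k to ℕ using by omega
  have h := distG_reachable_add_two_mul (2 * k + 1) (x + 1) k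
  rw [show x + 1 + 2 * (k : ℤ) = x + (2 * k + 1) by ring] at h
  exact (distG_adj_add h0 x).reachable.trans h.symm

/-- The triangles `{α ≥ 1, β ≥ 0}` and `{α ≤ 0, β ≥ 1}` of the diamond `|α| + |β| ≤ d`, which
together contain one of `±(α, β)` for each nonzero point, packed into a `d × (d + 1)` rectangle. -/
noncomputable def halfDiamond (d : ℕ) : Finset (ℤ × ℤ) :=
  (Ico 0 (d : ℤ) ×ˢ Icc 0 (d : ℤ)).image fun ij : ℤ × ℤ =>
    if ij.1 + ij.2 < d then (ij.1 + 1, ij.2) else (ij.2 - d, d - ij.1)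

lemma card_halfDiamond_le (d : ℕ) : #(halfDiamond d) ≤ d * (d + 1) :=
  card_image_le.trans (by simp)

lemma mem_halfDiamond_or_neg_mem {d : ℕ} {α β : ℤ} (h0 : (α, β) ≠ 0) (hd : |α| + |β| ≤ d) :
    (α, β) ∈ halfDiamond d ∨ -(α, β) ∈ halfDiamond d := by
  have quadrant₁ {a b : ℤ} (ha : 1 ≤ a) (hb : 0 ≤ b) (hab : a + b ≤ d) : (a, b) ∈ halfDiamond d :=
    mem_image.2 ⟨(a - 1, b), by simp; omega, by simp [show a - 1 + b < d by omega]⟩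
  have quadrant₂ {a b : ℤ} (ha : a ≤ 0) (hb : 1 ≤ b) (hab : b - a ≤ d) : (a, b) ∈ halfDiamond d :=
    mem_image.2 ⟨(d - b, a + d), by simp; omega, by simp [show ¬d - b + (a + d) < d by omega]⟩
  simp only [ne_eq, Prod.mk_eq_zero, not_and, Prod.neg_mk] at h0 ⊢
  have := le_abs_self α; have := neg_abs_le α; have := le_abs_self β; have := neg_abs_le β
  rcases lt_trichotomy α 0 with hα | rfl | hα
  · obtain hβ | hβ := le_or_gt β 0
    · exact .inr (quadrant₁ (by omega) (by omega) (by omega))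
    · exact .inl (quadrant₂ (by omega) (by omega) (by omega))
  · obtain hβ | hβ := lt_or_gt_of_ne (h0 rfl)
    · exact .inr (quadrant₂ (by omega) (by omega) (by omega))
    · exact .inl (quadrant₂ (by omega) (by omega) (by omega))
  · obtain hβ | hβ := lt_or_ge β 0
    · exact .inr (quadrant₂ (by omega) (by omega) (by omega))
    · exact .inl (quadrant₁ (by omega) (by omega) (by omega))

/-- `G.dist` is `0` between unreachable vertices, which are therefore adjacent here. -/
def SimpleGraph.power {V : Type*} (G : SimpleGraph V) (d : ℕ) : SimpleGraph V where
  Adj u v := u ≠ v ∧ G.dist u v ≤ d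
  symm := ⟨fun _ _ h => ⟨h.1.symm, G.dist_comm ▸ h.2⟩⟩
  loopless := ⟨fun _ h => h.1 rfl⟩

lemma abs_sub_mem_of_distG_power_adj {t : ℤ} (ht : Odd t) (h0 : 0 < t) {d : ℕ} {u v : ℤ}
    (h : ((distG t).power d).Adj u v) :
    |u - v| ∈ (halfDiamond d).image fun p => |2 * p.1 + t * p.2| := by
  obtain ⟨huv, hdist⟩ := h
  obtain ⟨p, hp⟩ := (distG_preconnected ht h0 u v).exists_walk_length_eq_dist
  obtain ⟨α, β, hsub, hlen⟩ := exists_sub_eq_of_distG_walk p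
  have hlen' : |α| + |β| ≤ d := hlen.trans (by exact_mod_cast hp ▸ hdist)
  have hne : (α, β) ≠ 0 := by
    simp only [ne_eq, Prod.mk_eq_zero, not_and]
    rintro rfl rfl
    exact huv (by linarith)
  rw [abs_sub_comm, hsub]
  rcases mem_halfDiamond_or_neg_mem hne hlen' with h | h
  · exact mem_image.2 ⟨_, h, rfl⟩
  · exact mem_image.2 ⟨_, h, by rw [← abs_neg]; simp only [Prod.fst_neg, Prod.snd_neg]; ring_nf⟩

theorem stmt14_general (t : ℤ) (ht : Odd t) (h3 : 3 ≤ t) (d : ℕ) :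
    ∃ f : ℤ → Fin (1 + d * (d + 1)), ∀ u v : ℤ, u ≠ v → f u = f v →
      d < (distG t).dist u v := by
  let P := (halfDiamond d).image fun p => |2 * p.1 + t * p.2|
  have hP : #P ≤ d * (d + 1) := card_image_le.trans (card_halfDiamond_le d)
  have hcol := colorable_of_adj_abs_sub_mem P fun _ _ =>
    abs_sub_mem_of_distG_power_adj (d := d) ht (by omega)
  obtain ⟨C⟩ := hcol.mono (by omega : #P + 1 ≤ 1 + d * (d + 1))
  exact ⟨C, fun u v huv hC => not_le.1 fun h => C.valid ⟨huv, h⟩ hC⟩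

theorem stmt14 (t : ℤ) (ht : Odd t) (h3 : 3 ≤ t) (d : ℕ) (hd : (d : ℤ) ≤ (t + 1) / 2) :
    ∃ f : ℤ → Fin (1 + d * (d + 1)), ∀ u v : ℤ, u ≠ v → f u = f v →
      d < (distG t).dist u v :=
  stmt14_general t ht h3 d
end
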